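/- arXiv:2006.06946 — 6 statements merged into one kernel-verified Lean document; each statement's English description precedes it below -/
import Mathlib

section
/- For every η with 0 ≤ η ≤ 1/(2 n L), the expectation over a uniformly random permutation σ of t(σ) satisfies ‖E_σ[t(σ)]‖ ≤ 4 η n L G. -/
open scoped RealInnerProductSpace

/-- `t(σ) = ∑_{j=1}^n (I − ηA_{σ(n)})(I − ηA_{σ(n−1)})···(I − ηA_{σ(j+1)}) b_{σ(j)}`
(indices `0`-based; the empty product is the identity). -/
noncomputable def tvec (d n : ℕ) (η : ℝ)
    (A : Fin n → EuclideanSpace ℝ (Fin d) →L[ℝ] EuclideanSpace ℝ (Fin d))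
    (b : Fin n → EuclideanSpace ℝ (Fin d)) (σ : Equiv.Perm (Fin n)) :
    EuclideanSpace ℝ (Fin d) :=
  ∑ j : Fin n,
    ((List.ofFn (fun s : Fin (n - 1 - (j : ℕ)) =>
        (1 : EuclideanSpace ℝ (Fin d) →L[ℝ] EuclideanSpace ℝ (Fin d)) -
          η • A (σ ⟨n - 1 - (s : ℕ), by have hs := s.isLt; omega⟩))).prod)
      (b (σ j))

/-!
Write `t(σ) = ∑ⱼ Pⱼ(σ) b_{σ(j)}`, where `Pⱼ(σ)` is the product of the factors `I − ηA_{σ(k)}`,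
`k > j`. Since `∑ bᵢ = 0`, averaging over the transpositions `σ ↦ σ ∘ (j p)` turns
`∑_σ Pⱼ(σ) b_{σ(j)}` into `(1/n) ∑_σ ∑_p (Pⱼ(σ ∘ (j p)) − Pⱼ(σ)) b_{σ(p)}`. The transposition
changes at most the one factor of `Pⱼ` at position `p`, by at most `2ηL` in norm, and every
factor has norm at most `1 + ηL` with `(1 + ηL)ⁿ ≤ e^{1/2} ≤ 2` for `η ≤ 1/(2nL)`. So each
increment is at most `4ηL` in norm, and summing over `j` gives `4ηnLG`.
-/

section ProductBounds

variable {R : Type*} [SeminormedRing R] {c : ℝ}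

theorem norm_prod_ofFn_le_pow (h1 : ‖(1 : R)‖ ≤ 1) :
    ∀ {K : ℕ} {f : Fin K → R}, (∀ s, ‖f s‖ ≤ c) → ‖(List.ofFn f).prod‖ ≤ c ^ K
  | 0, _, _ => by simpa using h1
  | K + 1, f, hf => by
    rw [List.ofFn_succ, List.prod_cons, pow_succ']
    exact (norm_mul_le _ _).trans <| mul_le_mul (hf 0)
      (norm_prod_ofFn_le_pow h1 fun s => hf s.succ) (norm_nonneg _) ((norm_nonneg _).trans (hf 0))

theorem norm_prod_ofFn_sub_le (h1 : ‖(1 : R)‖ ≤ 1) (hc : 1 ≤ c) :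
    ∀ {K : ℕ} {f g : Fin K → R}, (∀ s, ‖f s‖ ≤ c) → (∀ s, ‖g s‖ ≤ c) →
      ‖(List.ofFn f).prod - (List.ofFn g).prod‖ ≤ c ^ K * ∑ s, ‖f s - g s‖
  | 0, _, _, _, _ => by simp
  | K + 1, f, g, hf, hg => by
    set Pf := (List.ofFn fun s : Fin K => f s.succ).prod
    set Pg := (List.ofFn fun s : Fin K => g s.succ).prod
    have hPg : ‖Pg‖ ≤ c ^ K := norm_prod_ofFn_le_pow h1 fun s => hg s.succ
    have hPfg : ‖Pf - Pg‖ ≤ c ^ K * ∑ s : Fin K, ‖f s.succ - g s.succ‖ :=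
      norm_prod_ofFn_sub_le h1 hc (fun s => hf s.succ) (fun s => hg s.succ)
    have hcK : c ^ K ≤ c * c ^ K := le_mul_of_one_le_left (by positivity) hc
    rw [List.ofFn_succ, List.ofFn_succ, List.prod_cons, List.prod_cons, Fin.sum_univ_succ,
      show f 0 * Pf - g 0 * Pg = f 0 * (Pf - Pg) + (f 0 - g 0) * Pg by noncomm_ring]
    calc ‖f 0 * (Pf - Pg) + (f 0 - g 0) * Pg‖
        ≤ c * (c ^ K * ∑ s : Fin K, ‖f s.succ - g s.succ‖) + ‖f 0 - g 0‖ * c ^ K := by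
          refine (norm_add_le _ _).trans (add_le_add ?_ ?_)
          · exact (norm_mul_le _ _).trans (mul_le_mul (hf 0) hPfg (norm_nonneg _) (by linarith))
          · exact (norm_mul_le _ _).trans (mul_le_mul_of_nonneg_left hPg (norm_nonneg _))
      _ ≤ c ^ (K + 1) * (‖f 0 - g 0‖ + ∑ s : Fin K, ‖f s.succ - g s.succ‖) := by
          rw [pow_succ']
          linarith [mul_le_mul_of_nonneg_left hcK (norm_nonneg (f 0 - g 0))]

end ProductBounds

theorem one_add_pow_le_two {x : ℝ} {K : ℕ} (hx : 0 ≤ x) (hK : 2 * K * x ≤ 1) :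
    (1 + x) ^ K ≤ 2 :=
  calc (1 + x) ^ K ≤ Real.exp x ^ K := by
        gcongr; linarith [Real.add_one_le_exp x]
    _ = Real.exp (K * x) := (Real.exp_nat_mul x K).symm
    _ ≤ Real.exp (1 / 2) := Real.exp_le_exp.2 (by linarith)
    _ ≤ 1 / (1 - 1 / 2) := Real.exp_bound_div_one_sub_of_interval (by norm_num) (by norm_num)
    _ = 2 := by norm_num

theorem norm_sum_perm_apply_le {ι E F : Type*} [Fintype ι] [DecidableEq ι]
    [SeminormedAddCommGroup E] [NormedSpace ℝ E] [SeminormedAddCommGroup F] [NormedSpace ℝ F]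
    (T : Equiv.Perm ι → E →L[ℝ] F) {b : ι → E} {G δ : ℝ} (hb : ∑ i, b i = 0)
    (hbG : ∀ i, ‖b i‖ ≤ G) (j : ι) (hT : ∀ σ p, ‖T (σ * Equiv.swap j p) - T σ‖ ≤ δ) :
    ‖∑ σ, T σ (b (σ j))‖ ≤ Fintype.card (Equiv.Perm ι) * (δ * G) := by
  set S := ∑ σ, T σ (b (σ j))
  have hshift : ∀ p, S = ∑ σ, T (σ * Equiv.swap j p) (b (σ p)) := fun p => by
    simpa using (Equiv.sum_comp (Equiv.mulRight (Equiv.swap j p)) fun σ => T σ (b (σ j))).symm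
  have hcancel : ∀ σ : Equiv.Perm ι, ∑ p, T σ (b (σ p)) = 0 := fun σ => by
    rw [← map_sum, Equiv.sum_comp σ b, hb, map_zero]
  have hS : Fintype.card ι • S = ∑ σ, ∑ p, (T (σ * Equiv.swap j p) - T σ) (b (σ p)) := by
    simp only [sub_apply, Finset.sum_sub_distrib, hcancel, sub_zero]
    rw [Finset.sum_comm, ← Finset.sum_congr rfl fun p _ => hshift p]
    simp
  have hbound : (Fintype.card ι : ℝ) * ‖S‖
      ≤ Fintype.card ι * (Fintype.card (Equiv.Perm ι) * (δ * G)) :=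
    calc (Fintype.card ι : ℝ) * ‖S‖ = ‖Fintype.card ι • S‖ := by
          rw [← Nat.cast_smul_eq_nsmul ℝ, norm_smul, Real.norm_natCast]
      _ ≤ ∑ σ, ∑ p, ‖(T (σ * Equiv.swap j p) - T σ) (b (σ p))‖ := by
          rw [hS]
          exact (norm_sum_le _ _).trans (Finset.sum_le_sum fun σ _ => norm_sum_le _ _)
      _ ≤ ∑ _σ : Equiv.Perm ι, ∑ _p : ι, δ * G := by
          gcongr with σ _ p _
          exact (ContinuousLinearMap.le_opNorm _ _).trans
            (mul_le_mul (hT σ p) (hbG _) (norm_nonneg _) ((norm_nonneg _).trans (hT σ p)))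
      _ = Fintype.card ι * (Fintype.card (Equiv.Perm ι) * (δ * G)) := by
          simp only [Finset.sum_const, Finset.card_univ, nsmul_eq_mul]
          ring
  have : Nonempty ι := ⟨j⟩
  exact le_of_mul_le_mul_left hbound (by exact_mod_cast Fintype.card_pos)

section Factor

variable {E : Type*} [NormedAddCommGroup E] [NormedSpace ℝ E] {n : ℕ}

def factorIndex (j : Fin n) (s : Fin (n - 1 - (j : ℕ))) : Fin n :=
  ⟨n - 1 - (s : ℕ), by have hs := s.isLt; omega⟩

theorem factorIndex_ne (j : Fin n) (s : Fin (n - 1 - (j : ℕ))) : factorIndex j s ≠ j :=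
  Fin.ne_of_val_ne (by have := s.isLt; simp only [factorIndex]; omega)

theorem factorIndex_injective (j : Fin n) : Function.Injective (factorIndex j) := fun s s' h => by
  have := Fin.val_eq_of_eq h
  have := s.isLt
  have := s'.isLt
  simp only [factorIndex] at *
  omega

noncomputable def tvecFactor (η : ℝ) (A : Fin n → E →L[ℝ] E) (σ : Equiv.Perm (Fin n))
    (j : Fin n) : E →L[ℝ] E :=
  (List.ofFn fun s => (1 : E →L[ℝ] E) - η • A (σ (factorIndex j s))).prod

theorem tvec_eq_sum_tvecFactor (d : ℕ) (η : ℝ)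
    (A : Fin n → EuclideanSpace ℝ (Fin d) →L[ℝ] EuclideanSpace ℝ (Fin d))
    (b : Fin n → EuclideanSpace ℝ (Fin d)) (σ : Equiv.Perm (Fin n)) :
    tvec d n η A b σ = ∑ j, tvecFactor η A σ j (b (σ j)) :=
  rfl

variable {η L : ℝ}

theorem norm_one_sub_smul_le (hη : 0 ≤ η) {T : E →L[ℝ] E} (hT : ‖T‖ ≤ L) :
    ‖1 - η • T‖ ≤ 1 + η * L :=
  calc ‖1 - η • T‖ ≤ ‖(1 : E →L[ℝ] E)‖ + η * ‖T‖ :=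
        (norm_sub_le _ _).trans_eq (by rw [norm_smul, Real.norm_of_nonneg hη])
    _ ≤ 1 + η * L := add_le_add ContinuousLinearMap.norm_id_le (by gcongr)

theorem norm_tvecFactor_mul_swap_sub_le (hη : 0 ≤ η) {A : Fin n → E →L[ℝ] E}
    (hA : ∀ i, ‖A i‖ ≤ L) (σ : Equiv.Perm (Fin n)) (j p : Fin n) :
    ‖tvecFactor η A (σ * Equiv.swap j p) j - tvecFactor η A σ j‖
      ≤ (1 + η * L) ^ (n - 1 - (j : ℕ)) * (2 * η * L) := by
  have hL : 0 ≤ L := (norm_nonneg _).trans (hA j)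
  refine (norm_prod_ofFn_sub_le ContinuousLinearMap.norm_id_le
    (by nlinarith) (fun s => norm_one_sub_smul_le hη (hA _))
    (fun s => norm_one_sub_smul_le hη (hA _))).trans ?_
  gcongr
  have hdiff : ∀ i k, ‖(1 - η • A i) - (1 - η • A k)‖ ≤ 2 * η * L := fun i k =>
    calc ‖(1 - η • A i) - (1 - η • A k)‖ = η * ‖A k - A i‖ := by
          rw [sub_sub_sub_cancel_left, ← smul_sub, norm_smul, Real.norm_of_nonneg hη]
      _ ≤ η * (L + L) := by gcongr; exact (norm_sub_le _ _).trans (add_le_add (hA k) (hA i))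
      _ = 2 * η * L := by ring
  have hfixed : ∀ s, factorIndex j s ≠ p →
      (σ * Equiv.swap j p) (factorIndex j s) = σ (factorIndex j s) := fun s hs => by
    rw [Equiv.Perm.mul_apply, Equiv.swap_apply_of_ne_of_ne (factorIndex_ne j s) hs]
  by_cases hp : ∃ s₀, factorIndex j s₀ = p
  · obtain ⟨s₀, hs₀⟩ := hp
    rw [Finset.sum_eq_single s₀ (fun s _ hs => by
      rw [hfixed s (hs₀ ▸ (factorIndex_injective j).ne hs), sub_self, norm_zero])
      (by simp)]
    exact hdiff _ _
  · push Not at hp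
    simp only [hfixed _ (hp _), sub_self, norm_zero, Finset.sum_const_zero]
    positivity

theorem norm_tvecFactor_mul_swap_sub_le_of_le_one_div (hη0 : 0 ≤ η) {A : Fin n → E →L[ℝ] E}
    (hA : ∀ i, ‖A i‖ ≤ L) (hη : η ≤ 1 / (2 * n * L)) (σ : Equiv.Perm (Fin n)) (j p : Fin n) :
    ‖tvecFactor η A (σ * Equiv.swap j p) j - tvecFactor η A σ j‖ ≤ 4 * η * L := by
  have hL : 0 ≤ L := (norm_nonneg _).trans (hA j)
  have hstep : 2 * ((n - 1 - (j : ℕ) : ℕ) : ℝ) * (η * L) ≤ 1 := by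
    have hηnL : η * (2 * n * L) ≤ 1 := mul_le_of_le_div₀ zero_le_one (by positivity) hη
    have hlen : ((n - 1 - (j : ℕ) : ℕ) : ℝ) ≤ n := by norm_cast; omega
    nlinarith [mul_nonneg hη0 hL]
  calc _ ≤ (1 + η * L) ^ (n - 1 - (j : ℕ)) * (2 * η * L) :=
        norm_tvecFactor_mul_swap_sub_le hη0 hA σ j p
    _ ≤ 2 * (2 * η * L) := by gcongr; exact one_add_pow_le_two (by positivity) hstep
    _ = 4 * η * L := by ring

end Factor

theorem tvec_expectation_bound_general (d n : ℕ) (L G : ℝ)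
    (A : Fin n → EuclideanSpace ℝ (Fin d) →L[ℝ] EuclideanSpace ℝ (Fin d))
    (hAL : ∀ i, ‖A i‖ ≤ L)
    (b : Fin n → EuclideanSpace ℝ (Fin d))
    (hbsum : ∑ i, b i = 0) (hbG : ∀ i, ‖b i‖ ≤ G)
    (η : ℝ) (hη0 : 0 ≤ η) (hη : η ≤ 1 / (2 * n * L)) :
    ‖(Fintype.card (Equiv.Perm (Fin n)) : ℝ)⁻¹ •
        ∑ σ : Equiv.Perm (Fin n), tvec d n η A b σ‖ ≤ 4 * η * n * L * G := by
  set N := Fintype.card (Equiv.Perm (Fin n))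
  have hsum : ‖∑ σ, tvec d n η A b σ‖ ≤ n * (N * (4 * η * L * G)) := by
    simp only [tvec_eq_sum_tvecFactor]
    rw [Finset.sum_comm]
    refine (norm_sum_le _ _).trans ?_
    calc _ ≤ ∑ _j : Fin n, (N : ℝ) * (4 * η * L * G) := Finset.sum_le_sum fun j _ =>
          norm_sum_perm_apply_le (tvecFactor η A · j) hbsum hbG j
            (norm_tvecFactor_mul_swap_sub_le_of_le_one_div hη0 hAL hη · j)
      _ = n * (N * (4 * η * L * G)) := by simp
  have hN : (0 : ℝ) < N := by exact_mod_cast Fintype.card_pos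
  rw [norm_smul, norm_inv, Real.norm_natCast]
  calc (N : ℝ)⁻¹ * ‖∑ σ, tvec d n η A b σ‖ ≤ (N : ℝ)⁻¹ * (n * (N * (4 * η * L * G))) := by
        gcongr
    _ = 4 * η * n * L * G := by field_simp

/-- For `0 ≤ η ≤ 1/(2nL)`, the expectation of `t(σ)` over a uniformly random
permutation satisfies `‖E_σ[t(σ)]‖ ≤ 4ηnLG`. -/
theorem tvec_expectation_bound (d n : ℕ) (hd : 1 ≤ d) (hn : 2 ≤ n) (μ L G : ℝ)
    (hμ : 0 < μ) (hμL : μ ≤ L)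
    (A : Fin n → EuclideanSpace ℝ (Fin d) →L[ℝ] EuclideanSpace ℝ (Fin d))
    (hsymm : ∀ i x y, ⟪A i x, y⟫ = ⟪x, A i y⟫)
    (hAL : ∀ i, ‖A i‖ ≤ L)
    (hμI : ∀ x : EuclideanSpace ℝ (Fin d),
      μ * ‖x‖ ^ 2 ≤ ⟪x, ((n : ℝ)⁻¹ • ∑ i, A i) x⟫)
    (b : Fin n → EuclideanSpace ℝ (Fin d))
    (hbsum : ∑ i, b i = 0) (hbG : ∀ i, ‖b i‖ ≤ G)
    (η : ℝ) (hη0 : 0 ≤ η) (hη : η ≤ 1 / (2 * n * L)) :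
    ‖(Fintype.card (Equiv.Perm (Fin n)) : ℝ)⁻¹ •
        ∑ σ : Equiv.Perm (Fin n), tvec d n η A b σ‖ ≤ 4 * η * n * L * G :=
  tvec_expectation_bound_general d n L G A hAL b hbsum hbG η hη0 hη
end

section
/- Let B_1,…,B_n be d×d real matrices with spectral norm ‖B_t‖ ≤ L for all t, and let A_1,…,A_n be symmetric d×d real matrices with ‖A_j‖ ≤ L for all j whose average (1/n)∑_{j=1}^n A_j ⪰ μI, where 0 < μ ≤ L and κ := L/μ. Then for every η with 0 ≤ η ≤ 1/(5 n L κ), the matrix S̃ := I − η ∑_{j=1}^n [ (I − ηB_n)(I − ηB_{n−1})···(I − ηB_{j+1}) ] A_j (products in decreasing index order, empty product = I) satisfies ‖S̃‖ ≤ 1 − η n μ / 2. -/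
/-!
Put `T = ∑ⱼ Aⱼ` and let `Pⱼ` be the partial products, so that
`S̃ = (I - ηT) - η ∑ⱼ (Pⱼ - I) Aⱼ`. Since `⟪x, T x⟫ ≥ nμ‖x‖²` and `‖T‖ ≤ nL`, expanding
`‖x - ηTx‖²` gives `‖I - ηT‖ ≤ 1 - (9/10)ηnμ`; the step-size condition is exactly
`ηnL² ≤ μ/5`, which makes the quadratic term `η²n²L²` at most `ηnμ/5`. Each `Pⱼ` is a product
of at most `n` factors within `ηL` of `I`, so `‖Pⱼ - I‖ ≤ (1 + ηL)ⁿ - 1 ≤ (5/4)nηL`, and the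
perturbation costs at most `(5/4)η²n²L² ≤ ηnμ/4`.
-/

open scoped RealInnerProductSpace

theorem List.norm_prod_sub_one_le {R : Type*} [NormedRing R] (hone : ‖(1 : R)‖ ≤ 1) {r : ℝ} :
    ∀ l : List R, (∀ m ∈ l, ‖m - 1‖ ≤ r) → ‖l.prod - 1‖ ≤ (1 + r) ^ l.length - 1
  | [], _ => by simp
  | a :: t, h => by
    have ht := norm_prod_sub_one_le hone t fun m hm => h m (List.mem_cons_of_mem a hm)
    have hprod : ‖t.prod‖ ≤ (1 + r) ^ t.length := by
      linarith [norm_le_norm_add_norm_sub' t.prod 1]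
    calc ‖(a :: t).prod - 1‖ = ‖(a - 1) * t.prod + (t.prod - 1)‖ := by
          rw [List.prod_cons]; noncomm_ring
      _ ≤ r * (1 + r) ^ t.length + ((1 + r) ^ t.length - 1) :=
          norm_add_le_of_le (norm_mul_le_of_le (h a List.mem_cons_self) hprod) ht
      _ = (1 + r) ^ (a :: t).length - 1 := by rw [List.length_cons]; ring

theorem one_add_pow_sub_one_le {r x : ℝ} {k : ℕ} (hr : 0 ≤ r) (hk : k * r ≤ x) (hx : x ≤ 1 / 5) :
    (1 + r) ^ k - 1 ≤ 5 / 4 * x := by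
  have hx0 : 0 ≤ x := le_trans (by positivity) hk
  have hexp : (1 + r) ^ k ≤ Real.exp x :=
    calc (1 + r) ^ k ≤ Real.exp r ^ k := by
          gcongr; linarith [Real.add_one_le_exp r]
      _ = Real.exp (k * r) := (Real.exp_nat_mul r k).symm
      _ ≤ Real.exp x := Real.exp_le_exp.mpr hk
  have hinv : Real.exp x ≤ 1 / (1 - x) := Real.exp_bound_div_one_sub_of_interval hx0 (by linarith)
  have hrat : 1 / (1 - x) ≤ 1 + 5 / 4 * x := by
    rw [div_le_iff₀ (by linarith)]; nlinarith
  linarith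

theorem List.norm_prod_sub_one_le_of_length_mul_le {R : Type*} [NormedRing R]
    (hone : ‖(1 : R)‖ ≤ 1) {l : List R} {r x : ℝ} (hl : ∀ m ∈ l, ‖m - 1‖ ≤ r) (hr : 0 ≤ r)
    (hlen : l.length * r ≤ x) (hx : x ≤ 1 / 5) :
    ‖l.prod - 1‖ ≤ 5 / 4 * x :=
  (l.norm_prod_sub_one_le hone hl).trans (one_add_pow_sub_one_le hr hlen hx)

theorem norm_one_sub_smul_le_of_coercive {E : Type*} [NormedAddCommGroup E] [InnerProductSpace ℝ E]
    {T : E →L[ℝ] E} {c M η : ℝ} (hcoer : ∀ x, c * ‖x‖ ^ 2 ≤ ⟪x, T x⟫) (hT : ‖T‖ ≤ M)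
    (hη : 0 ≤ η) (hηM : η * M ^ 2 ≤ c / 5) (hηc : η * c ≤ 10 / 9) :
    ‖1 - η • T‖ ≤ 1 - 9 / 10 * (η * c) := by
  refine ContinuousLinearMap.opNorm_le_bound _ (by linarith) fun x => ?_
  have hTx : ‖T x‖ ≤ M * ‖x‖ := T.le_of_opNorm_le hT x
  have hsq : ‖x - η • T x‖ ^ 2 ≤ ((1 - 9 / 10 * (η * c)) * ‖x‖) ^ 2 := by
    rw [norm_sub_sq_real, real_inner_smul_right, norm_smul, Real.norm_of_nonneg hη]
    have h1 : η * (c * ‖x‖ ^ 2) ≤ η * ⟪x, T x⟫ := mul_le_mul_of_nonneg_left (hcoer x) hη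
    have h2 : (η * ‖T x‖) ^ 2 ≤ η * (η * M ^ 2) * ‖x‖ ^ 2 := by
      rw [mul_pow]
      nlinarith [pow_le_pow_left₀ (norm_nonneg _) hTx 2, sq_nonneg η]
    nlinarith [mul_le_mul_of_nonneg_right hηM (mul_nonneg hη (sq_nonneg ‖x‖)),
      sq_nonneg (η * c * ‖x‖)]
  have hc0 : 0 ≤ (1 - 9 / 10 * (η * c)) * ‖x‖ := mul_nonneg (by linarith) (norm_nonneg x)
  simpa using (sq_le_sq₀ (norm_nonneg _) hc0).mp hsq

theorem norm_one_sub_smul_sum_mul_le {ι R : Type*} [Fintype ι] [NormedRing R] [NormedSpace ℝ R]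
    {P A : ι → R} {η δ L : ℝ} (hη : 0 ≤ η) (hP : ∀ j, ‖P j - 1‖ ≤ δ) (hA : ∀ j, ‖A j‖ ≤ L) :
    ‖1 - η • ∑ j, P j * A j‖ ≤ ‖1 - η • ∑ j, A j‖ + η * (Fintype.card ι * (δ * L)) := by
  have hsum : ‖∑ j, P j * A j - ∑ j, A j‖ ≤ Fintype.card ι * (δ * L) := by
    rw [← Finset.sum_sub_distrib]
    calc ‖∑ j, (P j * A j - A j)‖ ≤ ∑ _j : ι, δ * L :=
          norm_sum_le_of_le _ fun j _ => sub_one_mul (P j) (A j) ▸ norm_mul_le_of_le (hP j) (hA j)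
      _ = Fintype.card ι * (δ * L) := by simp
  calc ‖1 - η • ∑ j, P j * A j‖
      ≤ ‖1 - η • ∑ j, A j‖ + ‖(1 - η • ∑ j, P j * A j) - (1 - η • ∑ j, A j)‖ :=
        norm_le_norm_add_norm_sub' _ _
    _ = ‖1 - η • ∑ j, A j‖ + η * ‖∑ j, P j * A j - ∑ j, A j‖ := by
        rw [sub_sub_sub_cancel_left (η • ∑ j, P j * A j) (η • ∑ j, A j) 1, ← smul_sub,
          norm_smul, Real.norm_of_nonneg hη, norm_sub_rev (∑ j, A j)]
    _ ≤ ‖1 - η • ∑ j, A j‖ + η * (Fintype.card ι * (δ * L)) := by gcongr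

/-- Contraction bound for the `SingleShuffle` epoch operator
`S̃ = I − η ∑_{j=1}^n (I − ηB_n)(I − ηB_{n−1})···(I − ηB_{j+1}) A_j`:
if `‖B_t‖ ≤ L`, the `A_j` are symmetric with `‖A_j‖ ≤ L` and average `⪰ μI`,
then `‖S̃‖ ≤ 1 − ηnμ/2` for every `0 ≤ η ≤ 1/(5nLκ)`. -/
theorem single_shuffle_contraction (d n : ℕ) (hn : 2 ≤ n) (μ L : ℝ)
    (hμ : 0 < μ) (hμL : μ ≤ L)
    (B A : Fin n → EuclideanSpace ℝ (Fin d) →L[ℝ] EuclideanSpace ℝ (Fin d))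
    (hBL : ∀ t, ‖B t‖ ≤ L)
    (hAL : ∀ j, ‖A j‖ ≤ L)
    (hμI : ∀ x : EuclideanSpace ℝ (Fin d),
      μ * ‖x‖ ^ 2 ≤ ⟪x, ((n : ℝ)⁻¹ • ∑ j, A j) x⟫)
    (η : ℝ) (hη0 : 0 ≤ η) (hη : η ≤ 1 / (5 * n * L * (L / μ))) :
    ‖(1 : EuclideanSpace ℝ (Fin d) →L[ℝ] EuclideanSpace ℝ (Fin d)) -
        η • ∑ j : Fin n,
          ((List.ofFn (fun s : Fin (n - 1 - (j : ℕ)) =>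
              (1 : EuclideanSpace ℝ (Fin d) →L[ℝ] EuclideanSpace ℝ (Fin d)) -
                η • B ⟨n - 1 - (s : ℕ), by have hs := s.isLt; omega⟩)).prod) * A j‖ ≤
      1 - η * n * μ / 2 := by
  have hL : 0 < L := hμ.trans_le hμL
  have hn0 : (0 : ℝ) < n := by norm_cast; omega
  have hscale : η * (n * L ^ 2) ≤ μ / 5 := by
    rw [le_div_iff₀ (by positivity)] at hη
    field_simp at hη ⊢
    linarith
  have hηnL : n * (η * L) ≤ 1 / 5 := by
    rw [← mul_le_mul_iff_of_pos_right hL]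
    nlinarith
  have hcoer : ∀ x, n * μ * ‖x‖ ^ 2 ≤ ⟪x, (∑ j, A j) x⟫ := fun x => by
    have hx := hμI x
    rw [smul_apply, real_inner_smul_right] at hx
    field_simp at hx
    linarith
  have hsum : ‖∑ j, A j‖ ≤ n * L := by
    simpa using norm_sum_le_of_le Finset.univ fun j _ => hAL j
  have hfactor : ∀ t, ‖(1 - η • B t) - 1‖ ≤ η * L := fun t => by
    rw [sub_sub_cancel_left, norm_neg, norm_smul, Real.norm_of_nonneg hη0]
    exact mul_le_mul_of_nonneg_left (hBL t) hη0
  refine (norm_one_sub_smul_sum_mul_le hη0 (fun j => List.norm_prod_sub_one_le_of_length_mul_le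
    ContinuousLinearMap.norm_id_le (List.forall_mem_ofFn_iff.mpr fun s => hfactor _) (by positivity)
    ?_ hηnL) hAL).trans ?_
  · rw [List.length_ofFn]
    gcongr
    omega
  · have hmain : ‖1 - η • ∑ j, A j‖ ≤ 1 - 9 / 10 * (η * (n * μ)) :=
      norm_one_sub_smul_le_of_coercive hcoer hsum hη0 (by nlinarith) (by nlinarith)
    have hquad := mul_le_mul_of_nonneg_left hscale (by positivity : (0 : ℝ) ≤ n * η)
    simp only [Fintype.card_fin]
    linarith [mul_nonneg (mul_nonneg hη0 hn0.le) hμ.le]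
end

section
/- Let {ξ_k}_{k≥0} be a sequence of positive real numbers, and suppose there exist an initial index k₀ > 0 and real numbers A > 0 and α > β > 0 such that ξ_{k+1} ≤ exp(−α/(k₀+k+1)) · ξ_k + A/(k₀+k+1)^{β+1} for every integer k ≥ 0. Then for every integer K ≥ 1, ξ_K ≤ (k₀+1)^α ξ_0/(k₀+K)^α + (1/(α−β)) e^{α/(k₀+1)} A/(k₀+K)^β + e^{α/(k₀+1)} A/(k₀+K)^{β+1}. -/
/-!
Since `(x + 1) ^ α ≤ exp (α / x) * x ^ α`, the weighted sequence `(k₀ + k + 1) ^ α * ξ k`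
obeys an additive recurrence: each step raises it by at most
`exp (α / (k₀ + 1)) * A * (k₀ + k + 1) ^ (α - β - 1)`. Summing these increments, and comparing
`(α - β) * ∑ j < K, (k₀ + j + 1) ^ (α - β - 1)` with `(k₀ + K) ^ (α - β)` through the tangent-line
inequality of the convex (if `α - β ≥ 1`) or concave (if `α - β ≤ 1`) function `x ^ (α - β)`,
gives the bound after dividing by `(k₀ + K) ^ α`.
-/

open Finset Real

theorem le_add_sum_of_sub_le {G : Type*} [AddCommGroup G] [PartialOrder G] [IsOrderedAddMonoid G]
    {f g : ℕ → G} (h : ∀ k, f (k + 1) - f k ≤ g k) (n : ℕ) :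
    f n ≤ f 0 + ∑ k ∈ range n, g k := by
  have hsum := sum_le_sum fun k (_ : k ∈ range n) => h k
  rw [sum_range_sub] at hsum
  simpa [add_comm] using add_le_add_left hsum (f 0)

theorem sum_range_le_sub_of_le_sub {G : Type*} [AddCommGroup G] [PartialOrder G]
    [IsOrderedAddMonoid G] {f g : ℕ → G} (h : ∀ k, g k ≤ f (k + 1) - f k) (n : ℕ) :
    ∑ k ∈ range n, g k ≤ f n - f 0 :=
  sum_range_sub f n ▸ sum_le_sum fun k _ => h k

theorem add_one_rpow_le_exp_mul_rpow {x α : ℝ} (hx : 0 < x) (hα : 0 ≤ α) :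
    (x + 1) ^ α ≤ exp (α / x) * x ^ α := calc
  (x + 1) ^ α = x ^ α * (x⁻¹ + 1) ^ α := by
    rw [← mul_rpow hx.le (by positivity), mul_add, mul_inv_cancel₀ hx.ne', mul_one, add_comm]
  _ ≤ x ^ α * exp x⁻¹ ^ α := by gcongr; exact add_one_le_exp _
  _ = exp (α / x) * x ^ α := by rw [← exp_mul, mul_comm, inv_mul_eq_div]

theorem rpow_add_mul_rpow_sub_one_le_add_one_rpow {x γ : ℝ} (hx : 0 < x) (hγ : 1 ≤ γ) :
    x ^ γ + γ * x ^ (γ - 1) ≤ (x + 1) ^ γ := by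
  have bernoulli := one_add_mul_self_le_rpow_one_add (s := x⁻¹) (by linarith [inv_pos.2 hx]) hγ
  calc x ^ γ + γ * x ^ (γ - 1) = x ^ γ * (1 + γ * x⁻¹) := by
        rw [rpow_sub_one hx.ne']; ring
    _ ≤ x ^ γ * (1 + x⁻¹) ^ γ := by gcongr
    _ = (x + 1) ^ γ := by
        rw [← mul_rpow hx.le (by positivity), mul_add, mul_inv_cancel₀ hx.ne', mul_one]

theorem rpow_add_mul_add_one_rpow_sub_one_le {x γ : ℝ} (hx : 0 ≤ x) (hγ₀ : 0 ≤ γ) (hγ₁ : γ ≤ 1) :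
    x ^ γ + γ * (x + 1) ^ (γ - 1) ≤ (x + 1) ^ γ := by
  have hy : 0 < x + 1 := by linarith
  have hs : -1 ≤ -(x + 1)⁻¹ := by
    rw [neg_le_neg_iff]; exact inv_le_one_of_one_le₀ (by linarith)
  have bernoulli := rpow_one_add_le_one_add_mul_self hs hγ₀ hγ₁
  have hx_eq : x = (x + 1) * (1 + -(x + 1)⁻¹) := by field_simp; ring
  calc x ^ γ + γ * (x + 1) ^ (γ - 1)
      = (x + 1) ^ γ * (1 + -(x + 1)⁻¹) ^ γ + γ * (x + 1) ^ (γ - 1) := by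
        rw [← mul_rpow hy.le (by linarith), ← hx_eq]
    _ ≤ (x + 1) ^ γ * (1 + γ * -(x + 1)⁻¹) + γ * (x + 1) ^ (γ - 1) := by gcongr
    _ = (x + 1) ^ γ := by rw [rpow_sub_one hy.ne']; ring

theorem mul_sum_range_rpow_sub_one_le {c γ : ℝ} (hc : 0 < c) (hγ : 0 < γ) (n : ℕ) :
    γ * ∑ j ∈ range n, (c + j + 1) ^ (γ - 1) ≤ (c + n) ^ γ + γ * (c + n) ^ (γ - 1) := by
  rw [mul_sum]
  rcases le_total 1 γ with hγ₁ | hγ₁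
  · have key := sum_range_le_sub_of_le_sub (f := fun k : ℕ => (c + k) ^ γ + γ * (c + k) ^ (γ - 1))
      (g := fun j => γ * (c + j + 1) ^ (γ - 1)) (fun k => by
        have := rpow_add_mul_rpow_sub_one_le_add_one_rpow (x := c + k) (by positivity) hγ₁
        simp only [Nat.cast_succ, ← add_assoc]
        linarith) n
    have : 0 ≤ (c + (0 : ℕ)) ^ γ + γ * (c + (0 : ℕ)) ^ (γ - 1) := by positivity
    linarith
  · have key := sum_range_le_sub_of_le_sub (f := fun k : ℕ => (c + k) ^ γ)
      (g := fun j => γ * (c + j + 1) ^ (γ - 1)) (fun k => by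
        have := rpow_add_mul_add_one_rpow_sub_one_le (x := c + k) (by positivity) hγ.le hγ₁
        simp only [Nat.cast_succ, ← add_assoc]
        linarith) n
    have : 0 ≤ (c + (0 : ℕ)) ^ γ := by positivity
    have : 0 ≤ γ * (c + n) ^ (γ - 1) := by positivity
    linarith

theorem add_one_rpow_mul_le_of_le_exp_mul_add {x u v A α β : ℝ} (hx : 0 < x) (hα : 0 ≤ α)
    (hu : 0 ≤ u) (hA : 0 ≤ A) (h : v ≤ exp (-α / x) * u + A / x ^ (β + 1)) :
    (x + 1) ^ α * v ≤ x ^ α * u + exp (α / x) * A * x ^ (α - β - 1) := calc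
  (x + 1) ^ α * v ≤ (x + 1) ^ α * (exp (-α / x) * u + A / x ^ (β + 1)) := by gcongr
  _ ≤ exp (α / x) * x ^ α * (exp (-α / x) * u + A / x ^ (β + 1)) := by
    gcongr
    exact add_one_rpow_le_exp_mul_rpow hx hα
  _ = x ^ α * u + exp (α / x) * A * x ^ (α - β - 1) := by
    rw [sub_sub, rpow_sub hx, neg_div, exp_neg]
    field_simp

theorem rpow_mul_le_add_sum_of_le_exp_mul_add {ξ : ℕ → ℝ} {c A α β : ℝ} (hξ : ∀ k, 0 ≤ ξ k)
    (hc : 0 ≤ c) (hA : 0 ≤ A) (hα : 0 ≤ α)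
    (hrec : ∀ k : ℕ, ξ (k + 1) ≤ exp (-α / (c + k + 1)) * ξ k + A / (c + k + 1) ^ (β + 1))
    (n : ℕ) :
    (c + n + 1) ^ α * ξ n ≤
      (c + 1) ^ α * ξ 0 + exp (α / (c + 1)) * A * ∑ j ∈ range n, (c + j + 1) ^ (α - β - 1) := by
  have key := le_add_sum_of_sub_le (f := fun k : ℕ => (c + k + 1) ^ α * ξ k)
    (g := fun k => exp (α / (c + 1)) * A * (c + k + 1) ^ (α - β - 1)) (fun k => by
      have hx : 0 < c + k + 1 := by positivity
      have hstep := add_one_rpow_mul_le_of_le_exp_mul_add hx hα (hξ k) hA (hrec k)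
      have hexp : exp (α / (c + k + 1)) ≤ exp (α / (c + 1)) :=
        exp_le_exp.2 (div_le_div_of_nonneg_left hα (by positivity) (by simp))
      have : 0 ≤ A * (c + k + 1) ^ (α - β - 1) := by positivity
      simp only [Nat.cast_succ, ← add_assoc]
      nlinarith) n
  simpa [mul_sum] using key

/-- Non-asymptotic Chung's lemma. -/
theorem chung_lemma (ξ : ℕ → ℝ) (k₀ A α β : ℝ)
    (hξ : ∀ k, 0 < ξ k) (hk₀ : 0 < k₀) (hA : 0 < A) (hβ : 0 < β) (hβα : β < α)
    (hrec : ∀ k : ℕ,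
      ξ (k + 1) ≤ Real.exp (-α / (k₀ + k + 1)) * ξ k + A / (k₀ + k + 1) ^ (β + 1)) :
    ∀ K : ℕ, 1 ≤ K →
      ξ K ≤ (k₀ + 1) ^ α * ξ 0 / (k₀ + K) ^ α
          + (1 / (α - β)) * Real.exp (α / (k₀ + 1)) * A / (k₀ + K) ^ β
          + Real.exp (α / (k₀ + 1)) * A / (k₀ + K) ^ (β + 1) := by
  intro K _
  have hα : 0 < α := hβ.trans hβα
  have hγ : 0 < α - β := sub_pos.2 hβα
  have hweighted := rpow_mul_le_add_sum_of_le_exp_mul_add (fun k => (hξ k).le) hk₀.le hA.le hα.le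
    hrec K
  have hpow := mul_sum_range_rpow_sub_one_le hk₀ hγ K
  set E := exp (α / (k₀ + 1))
  set S := ∑ j ∈ range K, (k₀ + j + 1) ^ (α - β - 1)
  set P := k₀ + (K : ℝ)
  have hP : 0 < P := by positivity
  have hS : S ≤ (P ^ (α - β) + (α - β) * P ^ (α - β - 1)) / (α - β) := by
    rw [le_div_iff₀ hγ]; linarith
  have hsplit : P ^ α = P ^ β * P ^ (α - β) := by rw [← rpow_add hP, add_sub_cancel]
  calc ξ K = ξ K * P ^ α / P ^ α := by field_simp
    _ ≤ ((k₀ + 1) ^ α * ξ 0 + E * A * S) / P ^ α := by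
        gcongr
        calc ξ K * P ^ α ≤ ξ K * (P + 1) ^ α :=
              mul_le_mul_of_nonneg_left (rpow_le_rpow hP.le (by linarith) hα.le) (hξ K).le
          _ ≤ _ := by rw [mul_comm]; exact hweighted
    _ ≤ ((k₀ + 1) ^ α * ξ 0
          + E * A * ((P ^ (α - β) + (α - β) * P ^ (α - β - 1)) / (α - β))) / P ^ α := by
        gcongr
    _ = _ := by
        rw [hsplit, rpow_sub_one hP.ne', rpow_add_one hP.ne']
        field_simp
        ring
end

section
/- Let n > 0 be an integer and {ξ_k}_{k≥0} a sequence of positive real numbers. Suppose there exist an initial index k₀ > 0 and real numbers A₁, A₂ > 0, α > β > 0, and ε > 0 such that (i) ξ₁ ≤ exp(−α ∑_{i=1}^{n} 1/(k₀+i)) · ξ₀ + A₁, and (ii) ξ_{k+1} ≤ exp(−α ∑_{i=1}^{n} 1/(k₀+nk+i) + ε/k²) · ξ_k + A₂/(k₀+n(k+1))^{β+1} for every integer k ≥ 1. Then for every integer K ≥ 1, with c := e^{ε π²/6}, one has ξ_K ≤ c (k₀+1)^α ξ₀/(k₀+nK)^α + c (k₀+n+1)^α A₁/(k₀+nK)^α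 + (c/(α−β)) e^{α/(k₀+n+1)} A₂/(n (k₀+nK)^β) + c e^{α/(k₀+n+1)} A₂/(k₀+nK)^{β+1}. -/
/-!
Write `x k = k₀ + n k`. Since `log ((a + n + 1) / (a + 1)) ≤ ∑_{i=1}^n 1 / (a + i)`, the
contraction factor of step `k` is at most `((x k + 1) / (x (k + 1) + 1)) ^ α`, so the weighted
sequence `u k = ξ k (x k + 1) ^ α` satisfies
`u (k + 1) ≤ e^{ε / k²} u k + A₂ (x (k + 1) + 1) ^ α / x (k + 1) ^ (β + 1)`.
Unrolling this linear recursion costs the factor `∏ e^{ε / j²} ≤ e^{ε π² / 6}`. Each forcing term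
is at most `e^{α / (k₀ + n + 1)} x k ^ (α - β - 1)`, and their sum is compared with
`x K ^ (α - β) / (n (α - β))` through the tangent-line inequalities for the convex (`α - β ≥ 1`)
or concave (`α - β ≤ 1`) power `t ↦ t ^ (α - β)`. Dividing by `x K ^ α ≤ (x K + 1) ^ α` gives
the claim.
-/

open Real Finset

theorem rpow_add_mul_rpow_sub_one_le_rpow_add {p a d : ℝ} (hp : 1 ≤ p) (ha : 0 < a)
    (had : 0 ≤ a + d) : a ^ p + p * d * a ^ (p - 1) ≤ (a + d) ^ p := by
  have hs : -1 ≤ d / a := by rw [le_div_iff₀ ha]; linarith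
  calc a ^ p + p * d * a ^ (p - 1) = a ^ p * (1 + p * (d / a)) := by
        rw [rpow_sub_one ha.ne']; field_simp
    _ ≤ a ^ p * (1 + d / a) ^ p := by gcongr; exact one_add_mul_self_le_rpow_one_add hs hp
    _ = (a + d) ^ p := by
        rw [← mul_rpow ha.le (by linarith), mul_add, mul_one, mul_div_cancel₀ _ ha.ne']

theorem rpow_add_le_rpow_add_mul_rpow_sub_one {p a d : ℝ} (hp₀ : 0 ≤ p) (hp₁ : p ≤ 1)
    (ha : 0 < a) (had : 0 ≤ a + d) : (a + d) ^ p ≤ a ^ p + p * d * a ^ (p - 1) := by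
  have hs : -1 ≤ d / a := by rw [le_div_iff₀ ha]; linarith
  calc (a + d) ^ p = a ^ p * (1 + d / a) ^ p := by
        rw [← mul_rpow ha.le (by linarith), mul_add, mul_one, mul_div_cancel₀ _ ha.ne']
    _ ≤ a ^ p * (1 + p * (d / a)) := by
        gcongr; exact rpow_one_add_le_one_add_mul_self hs hp₀ hp₁
    _ = a ^ p + p * d * a ^ (p - 1) := by rw [rpow_sub_one ha.ne']; field_simp

theorem log_add_one_sub_log_le_one_div {x : ℝ} (hx : 0 < x) : log (x + 1) - log x ≤ 1 / x := by
  rw [← log_div (by positivity) hx.ne']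
  calc log ((x + 1) / x) ≤ (x + 1) / x - 1 := log_le_sub_one_of_pos (by positivity)
    _ = 1 / x := by field_simp; ring

theorem log_sub_log_le_sum_Icc_one_div {a : ℝ} (ha : -1 < a) (n : ℕ) :
    log (a + n + 1) - log (a + 1) ≤ ∑ i ∈ Icc 1 n, 1 / (a + i) := by
  induction n with
  | zero => simp
  | succ n ih =>
    have step := log_add_one_sub_log_le_one_div (x := a + n + 1)
      (by linarith [n.cast_nonneg (α := ℝ)])
    rw [sum_Icc_succ_top (by omega), Nat.cast_add_one, ← add_assoc]
    linarith

theorem exp_neg_mul_sum_Icc_one_div_le {α a : ℝ} (hα : 0 ≤ α) (ha : -1 < a) (n : ℕ) :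
    exp (-(α * ∑ i ∈ Icc 1 n, 1 / (a + i))) ≤ (a + 1) ^ α / (a + n + 1) ^ α := by
  have h₁ : 0 < a + 1 := by linarith
  have h₂ : 0 < a + n + 1 := by linarith [n.cast_nonneg (α := ℝ)]
  rw [← exp_log (by positivity : 0 < (a + 1) ^ α / (a + n + 1) ^ α), exp_le_exp,
    log_div (by positivity) (by positivity), log_rpow h₁, log_rpow h₂]
  have := mul_le_mul_of_nonneg_left (log_sub_log_le_sum_Icc_one_div ha n) hα
  linarith

theorem rpow_add_one_le_exp_div_mul_rpow {α c x : ℝ} (hα : 0 ≤ α) (hc : 0 < c) (hcx : c ≤ x) :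
    (x + 1) ^ α ≤ exp (α / c) * x ^ α := by
  have hx : 0 < x := hc.trans_le hcx
  calc (x + 1) ^ α = (1 / x + 1) ^ α * x ^ α := by
        rw [← mul_rpow (by positivity) hx.le]; congr 1; field_simp; ring
    _ ≤ exp (1 / x) ^ α * x ^ α := by gcongr; exact add_one_le_exp _
    _ ≤ exp (α / c) * x ^ α := by
        rw [← exp_mul]; gcongr
        calc 1 / x * α = α / x := by ring
          _ ≤ α / c := by gcongr

theorem prod_Ico_exp_div_sq_le {ε : ℝ} (hε : 0 ≤ ε) (K : ℕ) :
    ∏ j ∈ Ico 1 K, exp (ε / (j : ℝ) ^ 2) ≤ exp (ε * π ^ 2 / 6) := by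
  rw [← exp_sum, exp_le_exp, mul_div_assoc]
  simp_rw [div_eq_mul_one_div ε, ← mul_sum]
  gcongr
  exact sum_le_hasSum _ (fun j _ => by positivity) hasSum_zeta_two

theorem le_prod_mul_add_sum_of_le_mul_add {u r b : ℕ → ℝ} {m : ℕ} (hr : ∀ k, m ≤ k → 1 ≤ r k)
    (hb : ∀ k, 0 ≤ b k) (hu : ∀ k, m ≤ k → u (k + 1) ≤ r k * u k + b (k + 1)) {K : ℕ}
    (hK : m ≤ K) : u K ≤ (∏ j ∈ Ico m K, r j) * (u m + ∑ k ∈ Ioc m K, b k) := by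
  induction K, hK using Nat.le_induction with
  | base => simp
  | succ K hK ih =>
    have hP : 1 ≤ ∏ j ∈ Ico m (K + 1), r j := one_le_prod fun j hj => hr j (mem_Ico.1 hj).1
    rw [prod_Ico_succ_top hK] at hP ⊢
    rw [sum_Ioc_succ_top hK]
    calc u (K + 1) ≤ r K * ((∏ j ∈ Ico m K, r j) * (u m + ∑ k ∈ Ioc m K, b k)) + b (K + 1) := by
          grw [hu K hK, ih]; linarith [hr K hK]
      _ ≤ _ := by linarith [mul_le_mul_of_nonneg_right hP (hb (K + 1))]

section ArithmeticProgression

variable {k₀ d p : ℝ}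

theorem sum_Ioc_rpow_sub_one_le_of_one_le (hk₀ : 0 ≤ k₀) (hd : 0 < d) (hp : 1 ≤ p) {K : ℕ}
    (hK : 1 ≤ K) :
    ∑ k ∈ Ioc 1 K, (k₀ + d * k) ^ (p - 1) ≤
      (k₀ + d * K) ^ p / (d * p) + (k₀ + d * K) ^ (p - 1) := by
  induction K, hK using Nat.le_induction with
  | base => simp only [Ioc_self, sum_empty]; positivity
  | succ K hK ih =>
    have tangent := rpow_add_mul_rpow_sub_one_le_rpow_add hp (by positivity : 0 < k₀ + d * K)
      (by positivity : 0 ≤ k₀ + d * K + d)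
    rw [sum_Ioc_succ_top hK, Nat.cast_succ, mul_add_one, ← add_assoc]
    have : (k₀ + d * K) ^ p / (d * p) + (k₀ + d * K) ^ (p - 1) ≤
        (k₀ + d * K + d) ^ p / (d * p) := by
      rw [div_add' _ _ _ (by positivity), div_le_div_iff_of_pos_right (by positivity)]
      linarith
    linarith

theorem sum_Ioc_rpow_sub_one_le_of_le_one (hk₀ : 0 ≤ k₀) (hd : 0 < d) (hp₀ : 0 < p)
    (hp₁ : p ≤ 1) {K : ℕ} (hK : 1 ≤ K) :
    ∑ k ∈ Ioc 1 K, (k₀ + d * k) ^ (p - 1) ≤ ((k₀ + d * K) ^ p - (k₀ + d) ^ p) / (d * p) := by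
  induction K, hK using Nat.le_induction with
  | base => simp
  | succ K hK ih =>
    have tangent := rpow_add_le_rpow_add_mul_rpow_sub_one hp₀.le hp₁
      (by positivity : 0 < k₀ + d * K + d) (by rw [add_neg_cancel_right]; positivity)
    rw [add_neg_cancel_right] at tangent
    rw [sum_Ioc_succ_top hK, Nat.cast_succ, mul_add_one, ← add_assoc]
    have : ((k₀ + d * K) ^ p - (k₀ + d) ^ p) / (d * p) + (k₀ + d * K + d) ^ (p - 1) ≤
        ((k₀ + d * K + d) ^ p - (k₀ + d) ^ p) / (d * p) := by
      rw [div_add' _ _ _ (by positivity), div_le_div_iff_of_pos_right (by positivity)]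
      linarith
    linarith

theorem sum_Ioc_rpow_sub_one_le (hk₀ : 0 ≤ k₀) (hd : 0 < d) (hp : 0 < p) {K : ℕ} (hK : 1 ≤ K) :
    ∑ k ∈ Ioc 1 K, (k₀ + d * k) ^ (p - 1) ≤
      (k₀ + d * K) ^ p / (d * p) + (k₀ + d * K) ^ (p - 1) := by
  rcases le_total 1 p with hp₁ | hp₁
  · exact sum_Ioc_rpow_sub_one_le_of_one_le hk₀ hd hp₁ hK
  · have : 0 ≤ (k₀ + d) ^ p / (d * p) := by positivity
    have : 0 ≤ (k₀ + d * K) ^ (p - 1) := by positivity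
    have := sum_Ioc_rpow_sub_one_le_of_le_one hk₀ hd hp hp₁ hK
    rw [sub_div] at this
    linarith

theorem sum_Ioc_add_one_rpow_div_rpow_le {α β : ℝ} (hk₀ : 0 ≤ k₀) (hd : 1 ≤ d) (hα : 0 ≤ α)
    (hβα : β < α) {K : ℕ} (hK : 1 ≤ K) :
    ∑ k ∈ Ioc 1 K, (k₀ + d * k + 1) ^ α / (k₀ + d * k) ^ (β + 1) ≤
      exp (α / (k₀ + d + 1)) *
        ((k₀ + d * K) ^ (α - β) / (d * (α - β)) + (k₀ + d * K) ^ (α - β - 1)) := by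
  have hterm : ∀ k ∈ Ioc 1 K, (k₀ + d * k + 1) ^ α / (k₀ + d * k) ^ (β + 1) ≤
      exp (α / (k₀ + d + 1)) * (k₀ + d * k) ^ (α - β - 1) := by
    intro k hk
    have hk₂ : (2 : ℝ) ≤ k := by exact_mod_cast (mem_Ioc.1 hk).1
    have hx : k₀ + d + 1 ≤ k₀ + d * k := by nlinarith
    have hx₀ : 0 < k₀ + d * k := by linarith
    calc (k₀ + d * k + 1) ^ α / (k₀ + d * k) ^ (β + 1)
        ≤ exp (α / (k₀ + d + 1)) * (k₀ + d * k) ^ α / (k₀ + d * k) ^ (β + 1) := by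
          gcongr; exact rpow_add_one_le_exp_div_mul_rpow hα (by linarith) hx
      _ = exp (α / (k₀ + d + 1)) * (k₀ + d * k) ^ (α - β - 1) := by
          rw [sub_sub, rpow_sub hx₀]; ring
  grw [sum_le_sum hterm, ← mul_sum, sum_Ioc_rpow_sub_one_le hk₀ (by linarith) (sub_pos.2 hβα) hK]

end ArithmeticProgression

theorem mul_rpow_le_of_le_exp_neg_mul_sum_add {α a e y y' b : ℝ} {n : ℕ} (hα : 0 ≤ α)
    (ha : -1 < a) (hy : 0 ≤ y) (h : y' ≤ exp (-(α * ∑ i ∈ Icc 1 n, 1 / (a + i)) + e) * y + b) :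
    y' * (a + n + 1) ^ α ≤ exp e * (y * (a + 1) ^ α) + b * (a + n + 1) ^ α := by
  have hD : 0 < (a + n + 1) ^ α := by
    have : 0 < a + n + 1 := by linarith [n.cast_nonneg (α := ℝ)]
    positivity
  calc y' * (a + n + 1) ^ α
      ≤ (exp (-(α * ∑ i ∈ Icc 1 n, 1 / (a + i)) + e) * y + b) * (a + n + 1) ^ α := by gcongr
    _ = exp e * (exp (-(α * ∑ i ∈ Icc 1 n, 1 / (a + i))) * (a + n + 1) ^ α) * y
          + b * (a + n + 1) ^ α := by rw [exp_add]; ring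
    _ ≤ exp e * ((a + 1) ^ α / (a + n + 1) ^ α * (a + n + 1) ^ α) * y
          + b * (a + n + 1) ^ α := by
        gcongr; exact exp_neg_mul_sum_Icc_one_div_le hα ha n
    _ = exp e * (y * (a + 1) ^ α) + b * (a + n + 1) ^ α := by
        rw [div_mul_cancel₀ _ hD.ne']; ring

theorem chung_weighted_bound {n : ℕ} {ξ : ℕ → ℝ} {k₀ A₁ A₂ α β ε : ℝ} (hξ : ∀ k, 0 ≤ ξ k)
    (hk₀ : 0 ≤ k₀) (hA₂ : 0 ≤ A₂) (hα : 0 ≤ α) (hε : 0 ≤ ε)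
    (h1 : ξ 1 ≤ exp (-(α * ∑ i ∈ Icc 1 n, 1 / (k₀ + (i : ℝ)))) * ξ 0 + A₁)
    (hrec : ∀ k : ℕ, 1 ≤ k →
      ξ (k + 1) ≤ exp (-(α * ∑ i ∈ Icc 1 n, 1 / (k₀ + n * k + i)) + ε / (k : ℝ) ^ 2) * ξ k
        + A₂ / (k₀ + n * ((k : ℝ) + 1)) ^ (β + 1))
    {K : ℕ} (hK : 1 ≤ K) :
    ξ K * (k₀ + n * K + 1) ^ α ≤ exp (ε * π ^ 2 / 6) * ((k₀ + 1) ^ α * ξ 0 + (k₀ + n + 1) ^ α * A₁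
      + A₂ * ∑ k ∈ Ioc 1 K, (k₀ + n * k + 1) ^ α / (k₀ + n * k) ^ (β + 1)) := by
  set u : ℕ → ℝ := fun k => ξ k * (k₀ + n * k + 1) ^ α
  set b : ℕ → ℝ := fun k => A₂ * ((k₀ + n * k + 1) ^ α / (k₀ + n * k) ^ (β + 1))
  have hu₁ : u 1 ≤ (k₀ + 1) ^ α * ξ 0 + (k₀ + n + 1) ^ α * A₁ := by
    rw [← add_zero (-(α * _))] at h1
    have := mul_rpow_le_of_le_exp_neg_mul_sum_add hα (by linarith) (hξ 0) h1
    rw [exp_zero, one_mul] at this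
    simp only [u, Nat.cast_one, mul_one]
    linarith
  have hu : ∀ k, 1 ≤ k → u (k + 1) ≤ exp (ε / (k : ℝ) ^ 2) * u k + b (k + 1) := fun k hk => by
    have hx : 0 ≤ k₀ + n * k := by positivity
    have := mul_rpow_le_of_le_exp_neg_mul_sum_add hα (by linarith) (hξ k) (hrec k hk)
    simp only [u, b, Nat.cast_add_one, mul_add_one, ← add_assoc] at this ⊢
    rwa [div_mul_eq_mul_div, mul_div_assoc] at this
  have hb : ∀ k, 0 ≤ b k := fun k => by positivity
  have hr : ∀ k : ℕ, 1 ≤ k → 1 ≤ exp (ε / (k : ℝ) ^ 2) := fun k _ => one_le_exp (by positivity)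
  have hu₁₀ : 0 ≤ u 1 := by have := hξ 1; positivity
  have hb₀ := sum_nonneg fun k (_ : k ∈ Ioc 1 K) => hb k
  calc ξ K * (k₀ + n * K + 1) ^ α = u K := rfl
    _ ≤ (∏ j ∈ Ico 1 K, exp (ε / (j : ℝ) ^ 2)) * (u 1 + ∑ k ∈ Ioc 1 K, b k) :=
        le_prod_mul_add_sum_of_le_mul_add hr hb hu hK
    _ ≤ _ := by
        rw [mul_sum]
        exact mul_le_mul (prod_Ico_exp_div_sq_le hε K) (by linarith) (by positivity) (exp_pos _).le

theorem chung_lemma_variant_general (n : ℕ) (hn : 0 < n) (ξ : ℕ → ℝ) (k₀ A₁ A₂ α β ε : ℝ)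
    (hξ : ∀ k, 0 < ξ k) (hk₀ : 0 < k₀) (hA₂ : 0 < A₂)
    (hβ : 0 < β) (hβα : β < α) (hε : 0 < ε)
    (h1 : ξ 1 ≤ Real.exp (-(α * ∑ i ∈ Finset.Icc 1 n, 1 / (k₀ + (i : ℝ)))) * ξ 0 + A₁)
    (hrec : ∀ k : ℕ, 1 ≤ k →
      ξ (k + 1) ≤
        Real.exp (-(α * ∑ i ∈ Finset.Icc 1 n, 1 / (k₀ + (n : ℝ) * (k : ℝ) + (i : ℝ)))
            + ε / (k : ℝ) ^ 2) * ξ k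
          + A₂ / (k₀ + (n : ℝ) * ((k : ℝ) + 1)) ^ (β + 1)) :
    ∀ K : ℕ, 1 ≤ K →
      ξ K ≤ Real.exp (ε * Real.pi ^ 2 / 6) * (k₀ + 1) ^ α * ξ 0 / (k₀ + (n : ℝ) * K) ^ α
          + Real.exp (ε * Real.pi ^ 2 / 6) * (k₀ + (n : ℝ) + 1) ^ α * A₁
              / (k₀ + (n : ℝ) * K) ^ α
          + (Real.exp (ε * Real.pi ^ 2 / 6) / (α - β)) * Real.exp (α / (k₀ + (n : ℝ) + 1))
              * A₂ / ((n : ℝ) * (k₀ + (n : ℝ) * K) ^ β)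
          + Real.exp (ε * Real.pi ^ 2 / 6) * Real.exp (α / (k₀ + (n : ℝ) + 1)) * A₂
              / (k₀ + (n : ℝ) * K) ^ (β + 1) := by
  intro K hK
  have hα : 0 < α := hβ.trans hβα
  have hn₁ : (1 : ℝ) ≤ n := Nat.one_le_cast.2 hn
  have hX : 0 < k₀ + n * K := by positivity
  have hξK := (hξ K).le
  have weighted := chung_weighted_bound (fun k => (hξ k).le) hk₀.le hA₂.le hα.le hε.le h1 hrec hK
  grw [sum_Ioc_add_one_rpow_div_rpow_le hk₀.le hn₁ hα.le hβα hK,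
    ← rpow_le_rpow hX.le (lt_add_one _).le hα.le] at weighted
  rw [← le_div_iff₀ (by positivity), rpow_sub hX, sub_sub, rpow_sub hX] at weighted
  have hαβ : 0 < α - β := sub_pos.2 hβα
  refine weighted.trans_eq ?_
  field_simp
  ring

/-- A variant of Chung's lemma capturing the dependence on both `n` and `K`. -/
theorem chung_lemma_variant (n : ℕ) (hn : 0 < n) (ξ : ℕ → ℝ) (k₀ A₁ A₂ α β ε : ℝ)
    (hξ : ∀ k, 0 < ξ k) (hk₀ : 0 < k₀) (hA₁ : 0 < A₁) (hA₂ : 0 < A₂)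
    (hβ : 0 < β) (hβα : β < α) (hε : 0 < ε)
    (h1 : ξ 1 ≤ Real.exp (-(α * ∑ i ∈ Finset.Icc 1 n, 1 / (k₀ + (i : ℝ)))) * ξ 0 + A₁)
    (hrec : ∀ k : ℕ, 1 ≤ k →
      ξ (k + 1) ≤
        Real.exp (-(α * ∑ i ∈ Finset.Icc 1 n, 1 / (k₀ + (n : ℝ) * (k : ℝ) + (i : ℝ)))
            + ε / (k : ℝ) ^ 2) * ξ k
          + A₂ / (k₀ + (n : ℝ) * ((k : ℝ) + 1)) ^ (β + 1)) :
    ∀ K : ℕ, 1 ≤ K →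
      ξ K ≤ Real.exp (ε * Real.pi ^ 2 / 6) * (k₀ + 1) ^ α * ξ 0 / (k₀ + (n : ℝ) * K) ^ α
          + Real.exp (ε * Real.pi ^ 2 / 6) * (k₀ + (n : ℝ) + 1) ^ α * A₁
              / (k₀ + (n : ℝ) * K) ^ α
          + (Real.exp (ε * Real.pi ^ 2 / 6) / (α - β)) * Real.exp (α / (k₀ + (n : ℝ) + 1))
              * A₂ / ((n : ℝ) * (k₀ + (n : ℝ) * K) ^ β)
          + Real.exp (ε * Real.pi ^ 2 / 6) * Real.exp (α / (k₀ + (n : ℝ) + 1)) * A₂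
              / (k₀ + (n : ℝ) * K) ^ (β + 1) :=
  chung_lemma_variant_general n hn ξ k₀ A₁ A₂ α β ε hξ hk₀ hA₂ hβ hβα hε h1 hrec
end

section
/- For every natural number n and every integer m with 2 ≤ m ≤ n, one has C(2n, m) − 2^m C(n, m) ≤ (2n)^m / m! − 2^m C(n, m) ≤ (2n)^{m−1} / (m−2)!, where C(a, b) denotes the binomial coefficient. -/
/-!
The first inequality is `C(N, m) ≤ N^m / m!`. For the second,
`2^m m! C(n, m) = ∏_{i<m} (2n - 2i)`, and by the (homogeneous) Weierstrass product inequality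
a product `∏ (x - a_i)` with `0 ≤ a_i ≤ x` is at least `x^m - (∑ a_i) x^(m-1)`.
Here `∑_{i<m} 2i = m(m-1)`, and `m(m-1) / m! = 1 / (m-2)!`.
-/

open Finset Nat

section OrderedRing

variable {R : Type*} [CommRing R] [LinearOrder R] [IsStrictOrderedRing R]

theorem Finset.pow_card_sub_sum_mul_le_prod_sub {ι : Type*} (s : Finset ι) {x : R} {a : ι → R}
    (ha : ∀ i ∈ s, 0 ≤ a i) (hax : ∀ i ∈ s, a i ≤ x) :
    x ^ #s - (∑ i ∈ s, a i) * x ^ (#s - 1) ≤ ∏ i ∈ s, (x - a i) := by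
  induction s using Finset.cons_induction with
  | empty => simp
  | cons j s _ ih =>
    rw [forall_mem_cons] at ha hax
    obtain ⟨haj, ha⟩ := ha
    obtain ⟨hajx, hax⟩ := hax
    have hx : 0 ≤ x := haj.trans hajx
    have hprod_le : ∏ i ∈ s, (x - a i) ≤ x ^ #s := by
      calc ∏ i ∈ s, (x - a i) ≤ ∏ _i ∈ s, x :=
            prod_le_prod (fun i hi => sub_nonneg.2 (hax i hi)) (fun i hi => by linarith [ha i hi])
        _ = x ^ #s := prod_const x
    have hpow : (∑ i ∈ s, a i) * x ^ (#s - 1) * x = (∑ i ∈ s, a i) * x ^ #s := by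
      rcases s.eq_empty_or_nonempty with rfl | hs
      · simp
      · rw [mul_assoc, pow_sub_one_mul hs.card_ne_zero]
    rw [card_cons, sum_cons, prod_cons, Nat.add_sub_cancel, pow_succ]
    linarith [mul_le_mul_of_nonneg_left (ih ha hax) hx, mul_le_mul_of_nonneg_left hprod_le haj]

theorem Finset.sum_range_natCast_mul_two (m : ℕ) :
    (∑ i ∈ range m, (i : R)) * 2 = m * (m - 1) := by
  induction m with
  | zero => simp
  | succ m ih => rw [sum_range_succ, add_mul, ih]; push_cast; ring

theorem Nat.pow_sub_descFactorial_le {n m : ℕ} (h : m ≤ n + 1) :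
    2 * ((n : R) ^ m - n.descFactorial m) ≤ m * (m - 1) * n ^ (m - 1) := by
  have key := (range m).pow_card_sub_sum_mul_le_prod_sub (x := (n : R)) (a := fun i => (i : R))
    (fun i _ => i.cast_nonneg) fun i hi => by
      have := mem_range.1 hi
      exact_mod_cast (by omega : i ≤ n)
  rw [card_range] at key
  rw [← descPochhammer_eval_eq_descFactorial, descPochhammer_eval_eq_prod_range,
    ← sum_range_natCast_mul_two]
  linarith

end OrderedRing

/-- For every natural number `n` and every integer `m` with `2 ≤ m ≤ n`,
`C(2n, m) − 2^m C(n, m) ≤ (2n)^m / m! − 2^m C(n, m) ≤ (2n)^{m−1} / (m−2)!`. -/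
theorem binom_double_bound (n m : ℕ) (h2 : 2 ≤ m) (hmn : m ≤ n) :
    ((Nat.choose (2 * n) m : ℝ) - 2 ^ m * (Nat.choose n m : ℝ) ≤
        (2 * (n : ℝ)) ^ m / (Nat.factorial m : ℝ) - 2 ^ m * (Nat.choose n m : ℝ)) ∧
      (2 * (n : ℝ)) ^ m / (Nat.factorial m : ℝ) - 2 ^ m * (Nat.choose n m : ℝ) ≤
        (2 * (n : ℝ)) ^ (m - 1) / (Nat.factorial (m - 2) : ℝ) := by
  refine ⟨sub_le_sub_right (by simpa using Nat.choose_le_pow_div (α := ℝ) m (2 * n)) _, ?_⟩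
  have hdesc := Nat.pow_sub_descFactorial_le (R := ℝ) (n := n) (m := m) (by omega)
  obtain ⟨k, rfl⟩ := Nat.exists_eq_add_of_le' h2
  have hchoose : (n.descFactorial (k + 2) : ℝ) = (k + 2)! * n.choose (k + 2) := by
    exact_mod_cast Nat.descFactorial_eq_factorial_mul_choose n (k + 2)
  have hfac : ((k + 2)! : ℝ) = (k + 2) * (k + 1) * k ! := by
    push_cast [Nat.factorial_succ]; ring
  simp only [Nat.add_sub_cancel, Nat.add_succ_sub_one] at hdesc ⊢
  rw [hchoose] at hdesc
  calc (2 * (n : ℝ)) ^ (k + 2) / (k + 2)! - 2 ^ (k + 2) * n.choose (k + 2)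
      = 2 ^ (k + 1) * (2 * ((n : ℝ) ^ (k + 2) - (k + 2)! * n.choose (k + 2))) / (k + 2)! := by
        field_simp; ring
    _ ≤ 2 ^ (k + 1) * ((k + 2 : ℕ) * ((k + 2 : ℕ) - 1) * n ^ (k + 1)) / (k + 2)! := by gcongr
    _ = (2 * (n : ℝ)) ^ (k + 1) / k ! := by rw [hfac]; field_simp; push_cast; ring
end

section
/- For every natural number n and every integer m with 2 ≤ m ≤ n, one has n^m / m! − C(n, m) ≤ n^{m−1} / (2 (m−2)!), where C(n, m) denotes the binomial coefficient. -/
/-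
Writing `n.descFactorial m = n (n - 1) ⋯ (n - m + 1) = m! * C(n, m)`, the claim is
`n ^ m - n.descFactorial m ≤ C(m, 2) n ^ (m - 1)` divided by `m! = 2 (m - 2)! C(m, 2)`.
That inequality follows by induction on `m`: passing from `m` to `m + 1` replaces a factor `n`
by `n - m`, which costs at most `m n ^ m`, and `C(m, 2) + m = C(m + 1, 2)`.
-/

namespace Nat

theorem mul_descFactorial_eq (n m : ℕ) :
    n * n.descFactorial m = n.descFactorial (m + 1) + m * n.descFactorial m := by
  rw [descFactorial_succ, ← add_mul]
  rcases le_or_gt m n with hmn | hnm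
  · rw [Nat.sub_add_cancel hmn]
  · simp [descFactorial_eq_zero_iff_lt.mpr hnm]

theorem pow_le_descFactorial_add_choose_two_mul (n : ℕ) :
    ∀ m : ℕ, n ^ m ≤ n.descFactorial m + m.choose 2 * n ^ (m - 1)
  | 0 => by simp
  | m + 1 => by
    have ih := pow_le_descFactorial_add_choose_two_mul n m
    have hdesc : m * n.descFactorial m ≤ m * n ^ m :=
      Nat.mul_le_mul_left m (descFactorial_le_pow n m)
    have hpow : n * (m.choose 2 * n ^ (m - 1)) ≤ m.choose 2 * n ^ m := by
      rcases m with _ | m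
      · simp
      · rw [Nat.add_sub_cancel, _root_.pow_succ' n m, mul_left_comm]
    calc n ^ (m + 1) = n * n ^ m := _root_.pow_succ' n m
      _ ≤ n * n.descFactorial m + n * (m.choose 2 * n ^ (m - 1)) := by
        rw [← mul_add]; exact Nat.mul_le_mul_left n ih
      _ ≤ n.descFactorial (m + 1) + (m + 1).choose 2 * n ^ m := by
        rw [mul_descFactorial_eq, show (m + 1).choose 2 = m + m.choose 2 from
          (choose_succ_succ' m 1).trans (by rw [choose_one_right]), add_mul]
        omega

end Nat

theorem binom_single_bound_general (n m : ℕ) (h2 : 2 ≤ m) :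
    (n : ℝ) ^ m / (Nat.factorial m : ℝ) - (Nat.choose n m : ℝ) ≤
      (n : ℝ) ^ (m - 1) / (2 * (Nat.factorial (m - 2) : ℝ)) := by
  have hfac : (m.choose 2 : ℝ) * (2 * (m - 2).factorial) = m.factorial := by
    exact_mod_cast (mul_assoc _ _ _).symm.trans (Nat.choose_mul_factorial_mul_factorial h2)
  have hdesc : (n : ℝ) ^ m ≤ m.factorial * n.choose m + m.choose 2 * n ^ (m - 1) := by
    exact_mod_cast Nat.descFactorial_eq_factorial_mul_choose n m ▸
      Nat.pow_le_descFactorial_add_choose_two_mul n m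
  calc (n : ℝ) ^ m / m.factorial - n.choose m
        = (n ^ m - m.factorial * n.choose m) / m.factorial := by field_simp
    _ ≤ m.choose 2 * n ^ (m - 1) / m.factorial := by gcongr; linarith
    _ = n ^ (m - 1) / (2 * (m - 2).factorial) := by
        rw [← hfac, mul_div_mul_left _ _ (by exact_mod_cast (Nat.choose_pos h2).ne')]

/-- For every natural number `n` and every integer `m` with `2 ≤ m ≤ n`,
`n^m / m! − C(n, m) ≤ n^{m−1} / (2 (m−2)!)`. -/
theorem binom_single_bound (n m : ℕ) (h2 : 2 ≤ m) (hmn : m ≤ n) :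
    (n : ℝ) ^ m / (Nat.factorial m : ℝ) - (Nat.choose n m : ℝ) ≤
      (n : ℝ) ^ (m - 1) / (2 * (Nat.factorial (m - 2) : ℝ)) :=
  binom_single_bound_general n m h2
end
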